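/- Under the Dijkstra invariants, for every incorrect fringe vertex v (d[v] > dist(s,v)), every shortest path from s to v contains at least two edges that are not within S; more precisely, it has a first vertex u ∉ S with u ∈ F and dist(s,v) ≥ dist(s,u) + (cost of at least one further edge on the path). -/

import Mathlib

open scoped ENNReal Classical
open Set

variable {V : Type*}

/-- Cost of a path (list of vertices): sum of edge costs of consecutive pairs. -/
noncomputable def pathCost (c : V → V → NNReal) (l : List V) : ℝ≥0∞ :=
  ((l.zip l.tail).map fun p => (c p.1 p.2 : ℝ≥0∞)).sum

/-- `l` is a path from `s` to `v` following edges of `E`. -/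
def IsPath (E : V → V → Prop) (s v : V) (l : List V) : Prop :=
  l.head? = some s ∧ l.getLast? = some v ∧ l.Chain' E

/-- A path from `s` to `v` all of whose intermediate vertices lie in `S`. -/
def IsSPath (E : V → V → Prop) (S : Set V) (s v : V) (l : List V) : Prop :=
  IsPath E s v l ∧ ∀ x ∈ l.dropLast.tail, x ∈ S

/-- Shortest-path distance from `s` to `v` (`∞` if unreachable). -/
noncomputable def gdist (E : V → V → Prop) (c : V → V → NNReal) (s v : V) : ℝ≥0∞ :=
  ⨅ l ∈ {l | IsPath E s v l}, pathCost c l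

/-- Shortest distance from `s` to `v` over paths with intermediates in `S`. -/
noncomputable def sdist (E : V → V → Prop) (c : V → V → NNReal) (S : Set V) (s v : V) : ℝ≥0∞ :=
  ⨅ l ∈ {l | IsSPath E S s v l}, pathCost c l

/-- The invariants of Dijkstra's algorithm for the partition `(S, F, U)` of the
vertex set with tentative distances `d`. -/
structure DijkstraInv (E : V → V → Prop) (c : V → V → NNReal) (s : V)
    (S F U : Set V) (d : V → ℝ≥0∞) : Prop where
  cover : S ∪ F ∪ U = univ
  disjSF : Disjoint S F
  disjSU : Disjoint S U
  disjFU : Disjoint F U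
  settled : ∀ u ∈ S, d u = gdist E c s u
  settledPath : ∀ u ∈ S, ∃ l, IsSPath E S s u l ∧ pathCost c l = d u
  fringe : ∀ u ∈ F, d u = sdist E c S s u ∧ ∃ l, IsSPath E S s u l
  unexplored : ∀ u ∈ U, ¬ ∃ l, IsSPath E S s u l

lemma pathCost_single (c : V → V → NNReal) (u : V) : pathCost c [u] = 0 := rfl

lemma pathCost_cons_cons (c : V → V → NNReal) (x y : V) (t : List V) :
    pathCost c (x :: y :: t) = (c x y : ℝ≥0∞) + pathCost c (y :: t) := by
  simp [pathCost]

lemma pathCost_append (c : V → V → NNReal) (l₁ : List V) (u : V) (rest : List V) :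
    pathCost c (l₁ ++ u :: rest) = pathCost c (l₁ ++ [u]) + pathCost c (u :: rest) := by
  induction l₁ with
  | nil => simp [pathCost_single]
  | cons a t ih =>
    cases t with
    | nil => simp [pathCost_cons_cons, pathCost_single]
    | cons b t' =>
      simp only [List.cons_append, pathCost_cons_cons] at *
      rw [ih, add_assoc]

lemma gdist_le_pathCost (E : V → V → Prop) (c : V → V → NNReal) (s v : V) (l : List V)
    (h : IsPath E s v l) : gdist E c s v ≤ pathCost c l :=
  iInf₂_le l h

lemma sdist_le_pathCost (E : V → V → Prop) (c : V → V → NNReal) (S : Set V) (s v : V)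
    (l : List V) (h : IsSPath E S s v l) : sdist E c S s v ≤ pathCost c l :=
  iInf₂_le l h

/-- Every shortest path to an incorrect fringe vertex `v` leaves `S` at a first
vertex `u ∈ F` followed by at least one further edge `(u, w)` on the path, with
`dist(s,v) ≥ dist(s,u) + c(u,w)`. -/
theorem shortest_path_to_incorrect_leaves_S (E : V → V → Prop) (c : V → V → NNReal)
    (s : V) (S F U : Set V) (d : V → ℝ≥0∞) (hinv : DijkstraInv E c s S F U d)
    (v : V) (hv : v ∈ F) (hincorrect : gdist E c s v < d v) :
    ∀ l : List V, IsPath E s v l → pathCost c l = gdist E c s v →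
      ∃ (l₁ : List V) (u w : V) (l₂ : List V),
        l = l₁ ++ u :: w :: l₂ ∧ (∀ x ∈ l₁, x ∈ S) ∧ u ∉ S ∧ u ∈ F ∧
        gdist E c s u + (c u w : ℝ≥0∞) ≤ gdist E c s v := by
  intro l hl hcost
  classical
  obtain ⟨hhead, hlast, hchain⟩ := hl
  set p : V → Bool := fun x => decide (x ∈ S) with hp
  have hsplit : l.takeWhile p ++ l.dropWhile p = l := List.takeWhile_append_dropWhile
  set l₁ := l.takeWhile p with hl₁def
  have hl₁S : ∀ x ∈ l₁, x ∈ S := by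
    intro x hx
    have := List.mem_takeWhile_imp hx
    simpa [hp] using this
  have hvS : v ∉ S := fun h => Set.disjoint_left.mp hinv.disjSF h hv
  have hvl : v ∈ l := List.mem_of_getLast? hlast
  have hne : l.dropWhile p ≠ [] := by
    intro h
    rw [h, List.append_nil] at hsplit
    exact hvS (hl₁S v (hsplit ▸ hvl))
  obtain ⟨u, rest, hur⟩ : ∃ u rest, l.dropWhile p = u :: rest := by
    cases h : l.dropWhile p with
    | nil => exact absurd h hne
    | cons a t => exact ⟨a, t, rfl⟩
  have huS : u ∉ S := by
    have := List.head?_dropWhile_not p l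
    rw [hur] at this
    simpa [hp] using this
  have hldecomp : l = l₁ ++ u :: rest := by rw [← hsplit, hur]
  have hpre : (l₁ ++ [u]) <+: l := ⟨rest, by rw [hldecomp, List.append_assoc]; rfl⟩
  have hprefixPath : IsPath E s u (l₁ ++ [u]) := by
    refine ⟨?_, List.getLast?_concat, hchain.prefix hpre⟩
    cases h1 : l₁ with
    | nil =>
      have h2 : l = u :: rest := by rw [hldecomp, h1]; rfl
      rw [h2] at hhead
      simp at hhead
      simp [hhead]
    | cons a t =>
      have h2 : l.head? = some a := by rw [hldecomp, h1]; rfl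
      rw [hhead] at h2
      simp at h2
      simp [h2]
  have hSPath : IsSPath E S s u (l₁ ++ [u]) := by
    refine ⟨hprefixPath, ?_⟩
    intro x hx
    apply hl₁S
    have := List.mem_of_mem_tail hx
    rw [List.dropLast_concat] at this
    exact this
  have huU : u ∉ U := fun hU => hinv.unexplored u hU ⟨_, hSPath⟩
  have huF : u ∈ F := by
    have : u ∈ S ∪ F ∪ U := hinv.cover ▸ Set.mem_univ u
    rcases this with (hS | hF) | hU
    · exact absurd hS huS
    · exact hF
    · exact absurd hU huU
  cases rest with
  | nil =>
    exfalso
    have huv : u = v := by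
      have : l.getLast? = some u := by
        rw [hldecomp]; exact List.getLast?_concat
      rw [hlast] at this
      exact (Option.some_inj.mp this).symm
    have : d v ≤ gdist E c s v := by
      rw [(hinv.fringe v hv).1]
      calc sdist E c S s v ≤ pathCost c (l₁ ++ [u]) :=
            sdist_le_pathCost E c S s v _ (huv ▸ hSPath)
        _ = pathCost c l := by rw [hldecomp]
        _ = gdist E c s v := hcost
    exact absurd hincorrect (not_lt.mpr this)
  | cons w l₂ =>
    refine ⟨l₁, u, w, l₂, hldecomp, hl₁S, huS, huF, ?_⟩
    calc gdist E c s u + (c u w : ℝ≥0∞)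
        ≤ pathCost c (l₁ ++ [u]) + (c u w : ℝ≥0∞) :=
          by gcongr; exact gdist_le_pathCost E c s u _ hprefixPath
      _ ≤ pathCost c (l₁ ++ [u]) + ((c u w : ℝ≥0∞) + pathCost c (w :: l₂)) := by
          rw [← add_assoc]; exact le_add_right le_rfl
      _ = pathCost c l := by
          rw [hldecomp, pathCost_append c l₁ u (w :: l₂), pathCost_cons_cons c u w l₂]
      _ = gdist E c s v := hcost
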